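/- Let n ≥ 1 and ε ≥ 0, and let ν be a random probability distribution on {0,1}^n (i.e., a measurable map from a probability space to the simplex of probability distributions on {0,1}^n) whose collision probability satisfies E[Σ_{x∈{0,1}^n} ν(x)²] ≤ (2+ε)/(2^n+1). Then for every δ ∈ (0,1): (i) with probability at least 1−δ, Σ_{x} ν(x)² ≤ (2+ε)/(δ·2^n); and consequently (ii) with probability at least 1−δ, the Shannon entropy satisfies S(ν) ≥ S₂(ν) ≥ n − log₂(2+ε) + log₂(δ). -/
import Mathlib


open Finset MeasureTheory

noncomputable section

/-- `μ` is a probability distribution on the finite type `S`. -/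
def IsProbDist {S : Type*} [Fintype S] (μ : S → ℝ) : Prop :=
  (∀ x, 0 ≤ μ x) ∧ ∑ x, μ x = 1

/-- Shannon entropy (base 2) of a distribution on a finite type. -/
def shannonEntropy {S : Type*} [Fintype S] (μ : S → ℝ) : ℝ :=
  -∑ x, μ x * Real.logb 2 (μ x)

/-- 2-Rényi (collision) entropy (base 2) of a distribution on a finite type. -/
def renyi2Entropy {S : Type*} [Fintype S] (μ : S → ℝ) : ℝ :=
  -Real.logb 2 (∑ x, μ x ^ 2)

lemma collision_pos {S : Type*} [Fintype S] {μ : S → ℝ} (h : IsProbDist μ) :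
    0 < ∑ x, μ x ^ 2 := by
  obtain ⟨hnn, hsum⟩ := h
  have hx : ∃ x : S, 0 < μ x := by
    by_contra hc
    push_neg at hc
    have : ∑ x, μ x = 0 := Finset.sum_eq_zero fun x _ => le_antisymm (hc x) (hnn x)
    simp [this] at hsum
  obtain ⟨x, hx⟩ := hx
  have h2 : 0 < μ x ^ 2 := by positivity
  exact lt_of_lt_of_le h2
    (Finset.single_le_sum (f := fun y => μ y ^ 2) (fun y _ => by positivity) (mem_univ x))

lemma shannon_ge_renyi2 {S : Type*} [Fintype S] {μ : S → ℝ} (h : IsProbDist μ) :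
    shannonEntropy μ ≥ renyi2Entropy μ := by
  classical
  obtain ⟨hnn, hsum⟩ := h
  have hcol := collision_pos ⟨hnn, hsum⟩
  set t := Finset.univ.filter (fun x : S => 0 < μ x) with ht
  have hzero : ∀ x ∈ (univ : Finset S), x ∉ t → μ x = 0 := by
    intro x _ hx
    simp only [ht, mem_filter, mem_univ, true_and] at hx
    exact le_antisymm (not_lt.mp hx) (hnn x)
  have hwsum : ∑ x ∈ t, μ x = 1 := by
    rw [← hsum]
    exact Finset.sum_subset (Finset.filter_subset _ _) (fun x hx h2 => hzero x hx h2)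
  have hjensen : ∑ x ∈ t, μ x • Real.log (μ x) ≤ Real.log (∑ x ∈ t, μ x • μ x) :=
    strictConcaveOn_log_Ioi.concaveOn.le_map_sum
      (fun i _ => hnn i) hwsum (fun i hi => by simpa [ht] using (mem_filter.mp hi).2)
  have h1 : ∑ x ∈ t, μ x • μ x = ∑ x, μ x ^ 2 := by
    rw [show ∑ x ∈ t, μ x • μ x = ∑ x ∈ t, μ x ^ 2 from
      Finset.sum_congr rfl fun x _ => by simp [sq]]
    exact Finset.sum_subset (Finset.filter_subset _ _)
      (fun x hx h2 => by rw [hzero x hx h2]; ring)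
  have h2 : ∑ x ∈ t, μ x • Real.log (μ x) = ∑ x, μ x * Real.log (μ x) := by
    rw [show ∑ x ∈ t, μ x • Real.log (μ x) = ∑ x ∈ t, μ x * Real.log (μ x) from
      Finset.sum_congr rfl fun x _ => by simp]
    exact Finset.sum_subset (Finset.filter_subset _ _)
      (fun x hx h2 => by rw [hzero x hx h2]; ring)
  have hkey : ∑ x, μ x * Real.log (μ x) ≤ Real.log (∑ x, μ x ^ 2) := by
    rw [← h1, ← h2]; exact hjensen
  have hlog2 : (0 : ℝ) < Real.log 2 := Real.log_pos one_lt_two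
  unfold shannonEntropy renyi2Entropy
  rw [ge_iff_le, neg_le_neg_iff]
  have hrw : ∑ x, μ x * Real.logb 2 (μ x) = (∑ x, μ x * Real.log (μ x)) / Real.log 2 := by
    rw [Finset.sum_div]
    exact Finset.sum_congr rfl fun x _ => by rw [Real.logb]; ring
  rw [hrw, Real.logb]
  exact div_le_div_of_nonneg_right hkey hlog2.le |>.trans_eq rfl

/-- A random distribution `ν` on `{0,1}^n` whose expected collision probability is at
most `(2+ε)/(2^n+1)` has, with probability at least `1−δ`, collision probability at
most `(2+ε)/(δ·2^n)` and hence Shannon entropy at least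
`n − log₂(2+ε) + log₂ δ`. -/
theorem random_circuit_high_entropy {Ω : Type*} [MeasurableSpace Ω]
    (P : Measure Ω) [IsProbabilityMeasure P]
    (n : ℕ) (hn : 1 ≤ n) (ε : ℝ) (hε : 0 ≤ ε)
    (ν : Ω → (Fin n → Bool) → ℝ)
    (hmeas : ∀ x, Measurable fun ω => ν ω x)
    (hprob : ∀ ω, IsProbDist (ν ω))
    (hmoment : ∫ ω, (∑ x, ν ω x ^ 2) ∂P ≤ (2 + ε) / ((2 : ℝ) ^ n + 1))
    (δ : ℝ) (hδ : δ ∈ Set.Ioo (0 : ℝ) 1) :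
    ENNReal.ofReal (1 - δ) ≤
        P {ω | ∑ x, ν ω x ^ 2 ≤ (2 + ε) / (δ * 2 ^ n)} ∧
      ENNReal.ofReal (1 - δ) ≤
        P {ω | shannonEntropy (ν ω) ≥ renyi2Entropy (ν ω) ∧
          renyi2Entropy (ν ω) ≥ n - Real.logb 2 (2 + ε) + Real.logb 2 δ} := by
  obtain ⟨hδ0, hδ1⟩ := hδ
  set X : Ω → ℝ := fun ω => ∑ x, ν ω x ^ 2 with hX
  set a : ℝ := (2 + ε) / (δ * 2 ^ n) with ha
  have h2n : (0 : ℝ) < 2 ^ n := by positivity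
  have h2ε : (0 : ℝ) < 2 + ε := by linarith
  have ha0 : 0 < a := by positivity
  have hXmeas : Measurable X := by
    apply Finset.measurable_sum
    intro x _
    exact (hmeas x).pow_const 2
  have hXnn : ∀ ω, 0 ≤ X ω := fun ω =>
    Finset.sum_nonneg fun x _ => by positivity
  have hXle1 : ∀ ω, X ω ≤ 1 := by
    intro ω
    obtain ⟨hnn, hsum⟩ := hprob ω
    calc X ω ≤ ∑ x, ν ω x := Finset.sum_le_sum fun x _ => by
          nlinarith [hnn x, hsum, Finset.single_le_sum (fun y (_ : y ∈ univ) => hnn y) (mem_univ x)]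
      _ = 1 := hsum
  have hXint : Integrable X P := by
    apply Integrable.mono' (integrable_const (1 : ℝ)) hXmeas.aestronglyMeasurable
    filter_upwards with ω
    rw [Real.norm_eq_abs, abs_of_nonneg (hXnn ω)]
    exact hXle1 ω
  -- Markov
  have hmarkov : a * (P {ω | a ≤ X ω}).toReal ≤ ∫ ω, X ω ∂P :=
    mul_meas_ge_le_integral_of_nonneg (Filter.Eventually.of_forall hXnn) hXint a
  have hPreal : (P {ω | a ≤ X ω}).toReal ≤ δ := by
    have h1 : a * (P {ω | a ≤ X ω}).toReal ≤ (2 + ε) / ((2 : ℝ) ^ n + 1) :=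
      hmarkov.trans hmoment
    have h2 : (P {ω | a ≤ X ω}).toReal ≤ ((2 + ε) / ((2 : ℝ) ^ n + 1)) / a :=
      (le_div_iff₀' ha0).mpr h1
    refine h2.trans ?_
    have heq : (2 + ε) / ((2 : ℝ) ^ n + 1) / a = δ * 2 ^ n / (2 ^ n + 1) := by
      rw [ha]; field_simp
    rw [heq, div_le_iff₀ (by positivity)]
    nlinarith
  have hPδ : P {ω | a ≤ X ω} ≤ ENNReal.ofReal δ := by
    rw [← ENNReal.ofReal_toReal (measure_ne_top P _)]
    exact ENNReal.ofReal_le_ofReal hPreal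
  have hsetmeas : MeasurableSet {ω | X ω ≤ a} := hXmeas measurableSet_Iic
  have hmain : ENNReal.ofReal (1 - δ) ≤ P {ω | X ω ≤ a} := by
    have hcompl : {ω | X ω ≤ a}ᶜ ⊆ {ω | a ≤ X ω} := by
      intro ω hω
      simp only [Set.mem_compl_iff, Set.mem_setOf_eq, not_le] at hω ⊢
      exact hω.le
    have : P {ω | X ω ≤ a} = 1 - P {ω | X ω ≤ a}ᶜ := by
      rw [measure_compl hsetmeas (measure_ne_top P _), measure_univ]
      rw [ENNReal.sub_sub_cancel ENNReal.one_ne_top (prob_le_one)]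
    rw [this]
    calc ENNReal.ofReal (1 - δ) = 1 - ENNReal.ofReal δ := by
          rw [ENNReal.ofReal_sub _ hδ0.le, ENNReal.ofReal_one]
      _ ≤ 1 - P {ω | X ω ≤ a}ᶜ :=
          tsub_le_tsub_left ((measure_mono hcompl).trans hPδ) 1
  refine ⟨hmain, le_trans hmain (measure_mono ?_)⟩
  intro ω hω
  simp only [Set.mem_setOf_eq] at hω ⊢
  have hprobω := hprob ω
  have hcolpos := collision_pos hprobω
  refine ⟨shannon_ge_renyi2 hprobω, ?_⟩
  -- renyi bound
  have hle : Real.logb 2 (X ω) ≤ Real.logb 2 a :=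
    (Real.logb_le_logb one_lt_two hcolpos ha0).mpr hω
  have hlogba : Real.logb 2 a = Real.logb 2 (2 + ε) - (Real.logb 2 δ + n) := by
    rw [ha, Real.logb_div (by positivity) (by positivity),
        Real.logb_mul (ne_of_gt hδ0) (by positivity)]
    have : Real.logb 2 ((2 : ℝ) ^ n) = n := by
      rw [Real.logb_pow]; simp
    rw [this]
  unfold renyi2Entropy
  rw [ge_iff_le]
  have : -Real.logb 2 a = (n : ℝ) - Real.logb 2 (2 + ε) + Real.logb 2 δ := by
    rw [hlogba]; ring
  linarith [hle]
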